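/- For γ ∈ (0,1) and absolutely continuous f, g on [0,T] with f ∈ 𝕃_γ and g ∈ ℝ_γ, the fractional integration-by-parts formula holds: ∫_0^T d_t^γ f(t) · g(t) dt = ∫_0^T f(t) · d_{T−t}^γ g(t) dt + g(T)(I_t^{1−γ} f)(T) − f(0)(I_{T−t}^{1−γ} g)(0). -/

import Mathlib

open MeasureTheory intervalIntegral

/-- The left Caputo fractional derivative of order `γ`. -/
noncomputable def leftCaputo (γ : ℝ) (f : ℝ → ℝ) (t : ℝ) : ℝ :=
  (1 / Real.Gamma (1 - γ)) * ∫ r in (0:ℝ)..t, deriv f r / (t - r) ^ γ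

/-- The right Caputo fractional derivative of order `γ` on `[0,T]`. -/
noncomputable def rightCaputo (γ T : ℝ) (g : ℝ → ℝ) (t : ℝ) : ℝ :=
  (-1 / Real.Gamma (1 - γ)) * ∫ r in t..T, deriv g r / (r - t) ^ γ

/-- The left Riemann–Liouville fractional integral of order `1-γ`. -/
noncomputable def leftRL (γ : ℝ) (w : ℝ → ℝ) (t : ℝ) : ℝ :=
  (1 / Real.Gamma (1 - γ)) * ∫ r in (0:ℝ)..t, w r / (t - r) ^ γ

/-- The right Riemann–Liouville fractional integral of order `1-γ` on `[0,T]`. -/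
noncomputable def rightRL (γ T : ℝ) (w : ℝ → ℝ) (t : ℝ) : ℝ :=
  (1 / Real.Gamma (1 - γ)) * ∫ r in t..T, w r / (r - t) ^ γ

/-!
The identity holds for every kernel `k` integrable on `(0, T]`, not only for
`k u = u ^ (-γ) / Γ(1 - γ)`. Extend `f, g, f', g', k` by zero outside `(0, T]`. After the
substitution `s = t + u`, the Caputo terms become integrals over the plane of
`f' t * g (t + u) * k u` and of `f t * g' (t + u) * k u`; these are integrable because `f`, `g`
are bounded and `f'`, `g'`, `k` are integrable. Integrating their sum first in `t`, for fixed
`u`, gives `∫₀^{T-u} (f * g (· + u))' = f (T - u) * g T - f 0 * g u` by the fundamental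
theorem of calculus, and integrating that against `k u` gives the two Riemann–Liouville
boundary terms.
-/

open Set

section Correlation

variable {G 𝕜 : Type*} [AddCommGroup G] [MeasurableSpace G] [MeasurableAdd₂ G]
  {μ : Measure G} [SFinite μ] [μ.IsAddLeftInvariant] [RCLike 𝕜] {c d K : G → 𝕜}

lemma integrable_mul_comp_add_mul_of_bdd_comp_add {M : ℝ} (hc : Integrable c μ)
    (hd : AEStronglyMeasurable d μ) (hdM : ∀ x, ‖d x‖ ≤ M) (hK : Integrable K μ) :
    Integrable (fun p : G × G => c p.1 * d (p.1 + p.2) * K p.2) (μ.prod μ) := by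
  have hd' : AEStronglyMeasurable (fun p : G × G => d (p.1 + p.2)) (μ.prod μ) :=
    (hd.comp_fst (ν := μ)).comp_measurePreserving (measurePreserving_add_prod μ μ)
  refine ((hc.mul_prod hK).bdd_mul hd' (c := M) (.of_forall fun p => hdM _)).congr ?_
  exact .of_forall fun p => by ring

lemma integrable_mul_comp_add_mul_of_bdd_left {M : ℝ} (hc : AEStronglyMeasurable c μ)
    (hcM : ∀ x, ‖c x‖ ≤ M) (hd : Integrable d μ) (hK : Integrable K μ) :
    Integrable (fun p : G × G => c p.1 * d (p.1 + p.2) * K p.2) (μ.prod μ) := by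
  have hdK : Integrable (fun p : G × G => d (p.1 + p.2) * K p.2) (μ.prod μ) :=
    (measurePreserving_add_prod μ μ).integrable_comp_of_integrable (hd.mul_prod hK)
  refine (hdK.bdd_mul (hc.comp_fst (ν := μ)) (c := M) (.of_forall fun p => hcM _)).congr ?_
  exact .of_forall fun p => by ring

lemma integral_mul_correlation_eq_integral_prod
    (hP : Integrable (fun p : G × G => c p.1 * d (p.1 + p.2) * K p.2) (μ.prod μ)) :
    ∫ t, c t * ∫ s, d s * K (s - t) ∂μ ∂μ = ∫ p, c p.1 * d (p.1 + p.2) * K p.2 ∂(μ.prod μ) := by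
  rw [integral_prod _ hP]
  congr 1; ext t
  simp only [mul_assoc, MeasureTheory.integral_const_mul]
  rw [← integral_add_left_eq_self (fun s => d s * K (s - t)) t]
  simp only [add_sub_cancel_left]

lemma integral_mul_convolution_eq_integral_prod [MeasurableNeg G]
    (hP : Integrable (fun p : G × G => c p.1 * d (p.1 + p.2) * K p.2) (μ.prod μ)) :
    ∫ s, d s * ∫ t, c t * K (s - t) ∂μ ∂μ = ∫ p, c p.1 * d (p.1 + p.2) * K p.2 ∂(μ.prod μ) := by
  set Q : G × G → 𝕜 := fun q => d q.1 * c q.2 * K (q.1 - q.2)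
  have hφ : MeasurePreserving (fun p : G × G => (p.1 + p.2, p.1)) (μ.prod μ) (μ.prod μ) :=
    Measure.measurePreserving_swap.comp (measurePreserving_prod_add μ μ)
  have hφe : MeasurableEmbedding (fun p : G × G => (p.1 + p.2, p.1)) :=
    ((MeasurableEquiv.shearAddRight G).trans MeasurableEquiv.prodComm).measurableEmbedding
  have hPQ : (fun p : G × G => c p.1 * d (p.1 + p.2) * K p.2) = Q ∘ fun p => (p.1 + p.2, p.1) := by
    ext p; simp only [Q, Function.comp_apply, add_sub_cancel_left]; ring
  have hQ : Integrable Q (μ.prod μ) := (hφ.integrable_comp_emb hφe).mp (hPQ ▸ hP)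
  rw [hPQ, Function.comp_def, hφ.integral_comp hφe Q, integral_prod _ hQ]
  congr 1; ext s
  rw [← MeasureTheory.integral_const_mul]
  simp only [Q, mul_assoc]

end Correlation

lemma indicator_mul_indicator_comp_eq_indicator {α β M : Type*} [MulZeroClass M]
    {S₁ S : Set α} {S₂ : Set β} {e : α → β} (hS : ∀ x, x ∈ S ↔ x ∈ S₁ ∧ e x ∈ S₂)
    (φ : α → M) (ψ : β → M) (x : α) :
    S₁.indicator φ x * S₂.indicator ψ (e x) = S.indicator (fun x => φ x * ψ (e x)) x := by
  by_cases h₁ : x ∈ S₁ <;> by_cases h₂ : e x ∈ S₂ <;> simp [indicator, hS, h₁, h₂]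

lemma exists_norm_indicator_Ioc_le {a b : ℝ} {f : ℝ → ℝ} (hf : ContinuousOn f (Icc a b)) :
    ∃ M, ∀ x, ‖(Ioc a b).indicator f x‖ ≤ M := by
  obtain ⟨M, hM⟩ := isCompact_Icc.exists_bound_of_continuousOn hf
  refine ⟨max M 0, fun x => ?_⟩
  by_cases hx : x ∈ Ioc a b
  · rw [indicator_of_mem hx]; exact le_max_of_le_left (hM x (Ioc_subset_Icc_self hx))
  · rw [indicator_of_notMem hx, norm_zero]; exact le_max_right _ _

lemma intervalIntegral_eq_integral_indicator_mul {a b : ℝ} (hab : a ≤ b) {F φ ψ : ℝ → ℝ}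
    (h : ∀ t ∈ Ioc a b, F t = φ t * ψ t) :
    ∫ t in a..b, F t = ∫ t, (Ioc a b).indicator φ t * ψ t := by
  rw [integral_of_le hab, ← MeasureTheory.integral_indicator measurableSet_Ioc]
  congr 1; ext t
  by_cases ht : t ∈ Ioc a b <;> simp [ht, h]

lemma intervalIntegral_mul_comp_sub_left_eq_integral_indicator {T t : ℝ} (ht : t ∈ Icc 0 T)
    (φ k : ℝ → ℝ) :
    ∫ r in 0..t, φ r * k (t - r) =
      ∫ r, (Ioc 0 T).indicator φ r * (Ioc 0 T).indicator k (t - r) := by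
  have hS : ∀ r, r ∈ Ioo 0 t ↔ r ∈ Ioc 0 T ∧ t - r ∈ Ioc 0 T := by
    intro r; simp only [mem_Ioo, mem_Ioc, mem_Icc] at ht ⊢; grind
  simp only [indicator_mul_indicator_comp_eq_indicator hS,
    MeasureTheory.integral_indicator measurableSet_Ioo,
    integral_of_le ht.1, integral_Ioc_eq_integral_Ioo]

lemma intervalIntegral_mul_comp_sub_right_eq_integral_indicator {T t : ℝ} (ht : t ∈ Icc 0 T)
    (φ k : ℝ → ℝ) :
    ∫ s in t..T, φ s * k (s - t) =
      ∫ s, (Ioc 0 T).indicator φ s * (Ioc 0 T).indicator k (s - t) := by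
  have hS : ∀ s, s ∈ Ioc t T ↔ s ∈ Ioc 0 T ∧ s - t ∈ Ioc 0 T := by
    intro s; simp only [mem_Ioc, mem_Icc] at ht ⊢; grind
  simp only [indicator_mul_indicator_comp_eq_indicator hS,
    MeasureTheory.integral_indicator measurableSet_Ioc,
    integral_of_le ht.2]

lemma integral_indicator_deriv_mul_comp_add {T u : ℝ} {f g f' g' : ℝ → ℝ} (hu : u ∈ Icc 0 T)
    (hf : ContinuousOn f (Icc 0 T)) (hg : ContinuousOn g (Icc 0 T))
    (hff' : ∀ t ∈ Ioo 0 T, HasDerivAt f (f' t) t) (hgg' : ∀ t ∈ Ioo 0 T, HasDerivAt g (g' t) t)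
    (hf' : IntervalIntegrable f' volume 0 T) (hg' : IntervalIntegrable g' volume 0 T) :
    ∫ t, ((Ioc 0 T).indicator f' t * (Ioc 0 T).indicator g (t + u) +
        (Ioc 0 T).indicator f t * (Ioc 0 T).indicator g' (t + u)) =
      f (T - u) * g T - f 0 * g u := by
  obtain ⟨hu0, huT⟩ := hu
  have hTu : 0 ≤ T - u := by linarith
  have hS : ∀ t, t ∈ Ioc 0 (T - u) ↔ t ∈ Ioc 0 T ∧ t + u ∈ Ioc 0 T := by
    intro t; simp only [mem_Ioc]; grind
  have hshift : MapsTo (· + u) (Icc 0 (T - u)) (Icc 0 T) := fun t ht =>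
    ⟨by linarith [ht.1], by linarith [ht.2]⟩
  have hf'u : IntervalIntegrable f' volume 0 (T - u) :=
    hf'.mono_set (uIcc_subset_uIcc_left
      (by rw [uIcc_of_le (by linarith)]; constructor <;> linarith))
  have hg'u : IntervalIntegrable (fun t => g' (t + u)) volume 0 (T - u) := by
    have := (hg'.mono_set (uIcc_subset_uIcc_right
      (by rw [uIcc_of_le (by linarith)]; exact ⟨hu0, huT⟩))).comp_add_right u
    rwa [sub_self] at this
  simp only [indicator_mul_indicator_comp_eq_indicator hS]
  rw [← indicator_add, MeasureTheory.integral_indicator measurableSet_Ioc, ← integral_of_le hTu]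
  have key := integral_deriv_mul_eq_sub_of_hasDerivAt (v := fun t => g (t + u))
    (by rw [uIcc_of_le hTu]; exact hf.mono (Icc_subset_Icc le_rfl (by linarith)))
    (by rw [uIcc_of_le hTu]; exact hg.comp (continuousOn_id.add continuousOn_const) hshift)
    (fun t ht => by
      rw [min_eq_left hTu, max_eq_right hTu] at ht
      exact hff' t ⟨ht.1, by linarith [ht.2]⟩)
    (fun t ht => by
      rw [min_eq_left hTu, max_eq_right hTu] at ht
      exact (hgg' (t + u) ⟨by linarith [ht.1], by linarith [ht.2]⟩).comp_add_const t u)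
    hf'u hg'u
  simpa using key

lemma intervalIntegral_kernel_mul_boundary_eq {T : ℝ} (hT : 0 ≤ T) {f g k : ℝ → ℝ}
    (hf : ContinuousOn f (Icc 0 T)) (hg : ContinuousOn g (Icc 0 T))
    (hk : IntervalIntegrable k volume 0 T) :
    ∫ u in 0..T, k u * (f (T - u) * g T - f 0 * g u) =
      g T * (∫ r in 0..T, f r * k (T - r)) - f 0 * ∫ s in 0..T, g s * k s := by
  have hfT : IntervalIntegrable (fun u => k u * f (T - u)) volume 0 T :=
    hk.mul_continuousOn (hf.comp (continuousOn_const.sub continuousOn_id) fun u hu => by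
      rw [uIcc_of_le hT] at hu; constructor <;> linarith [hu.1, hu.2])
  have hgT : IntervalIntegrable (fun u => g u * k u) volume 0 T :=
    hk.continuousOn_mul (by rwa [uIcc_of_le hT])
  have hreflect : ∫ r in 0..T, f r * k (T - r) = ∫ u in 0..T, k u * f (T - u) := by
    have := integral_comp_sub_left (fun r => f r * k (T - r)) T (a := 0) (b := T)
    simp only [sub_sub_cancel, sub_self, sub_zero] at this
    rw [← this]; congr 1; ext u; ring
  rw [hreflect, mul_comm (g T), mul_comm (f 0), ← intervalIntegral.integral_mul_const,
    ← intervalIntegral.integral_mul_const, ← integral_sub (hfT.mul_const _) (hgT.mul_const _)]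
  congr 1; ext u; ring

theorem volterra_integration_by_parts {T : ℝ} (hT : 0 ≤ T) {f g f' g' k : ℝ → ℝ}
    (hf : ContinuousOn f (Icc 0 T)) (hg : ContinuousOn g (Icc 0 T))
    (hff' : ∀ t ∈ Ioo 0 T, HasDerivAt f (f' t) t) (hgg' : ∀ t ∈ Ioo 0 T, HasDerivAt g (g' t) t)
    (hf' : IntervalIntegrable f' volume 0 T) (hg' : IntervalIntegrable g' volume 0 T)
    (hk : IntervalIntegrable k volume 0 T) :
    (∫ t in 0..T, (∫ r in 0..t, f' r * k (t - r)) * g t) +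
        ∫ t in 0..T, f t * ∫ s in t..T, g' s * k (s - t) =
      g T * (∫ r in 0..T, f r * k (T - r)) - f 0 * ∫ s in 0..T, g s * k s := by
  set I := Ioc (0 : ℝ) T
  have hint {φ : ℝ → ℝ} (hφ : IntervalIntegrable φ volume 0 T) : Integrable (I.indicator φ) :=
    hφ.1.integrable_indicator measurableSet_Ioc
  obtain ⟨Mf, hMf⟩ := exists_norm_indicator_Ioc_le hf
  obtain ⟨Mg, hMg⟩ := exists_norm_indicator_Ioc_le hg
  have hP₁ := integrable_mul_comp_add_mul_of_bdd_comp_add (hint hf')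
    (hint (hg.intervalIntegrable_of_Icc hT)).1 hMg (hint hk)
  have hP₂ := integrable_mul_comp_add_mul_of_bdd_left
    (hint (hf.intervalIntegrable_of_Icc hT)).1 hMf (hint hg') (hint hk)
  have hL : ∫ t in 0..T, (∫ r in 0..t, f' r * k (t - r)) * g t =
      ∫ s, I.indicator g s * ∫ t, I.indicator f' t * I.indicator k (s - t) :=
    intervalIntegral_eq_integral_indicator_mul hT fun t ht => by
      rw [intervalIntegral_mul_comp_sub_left_eq_integral_indicator (Ioc_subset_Icc_self ht),
        mul_comm]
  have hR : ∫ t in 0..T, f t * ∫ s in t..T, g' s * k (s - t) =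
      ∫ t, I.indicator f t * ∫ s, I.indicator g' s * I.indicator k (s - t) :=
    intervalIntegral_eq_integral_indicator_mul hT fun t ht => by
      rw [intervalIntegral_mul_comp_sub_right_eq_integral_indicator (Ioc_subset_Icc_self ht)]
  have hinner : ∀ u, ∫ t, (I.indicator f' t * I.indicator g (t + u) * I.indicator k u +
      I.indicator f t * I.indicator g' (t + u) * I.indicator k u) =
      I.indicator k u * ∫ t, (I.indicator f' t * I.indicator g (t + u) +
        I.indicator f t * I.indicator g' (t + u)) := fun u => by
    rw [← MeasureTheory.integral_const_mul]; congr 1; ext t; ring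
  rw [hL, hR, integral_mul_convolution_eq_integral_prod hP₁,
    integral_mul_correlation_eq_integral_prod hP₂, ← integral_add hP₁ hP₂, integral_prod_symm,
    ← intervalIntegral_kernel_mul_boundary_eq hT hf hg hk]
  · simp only [hinner]
    exact (intervalIntegral_eq_integral_indicator_mul hT fun u hu => by
      rw [integral_indicator_deriv_mul_comp_add (Ioc_subset_Icc_self hu) hf hg hff' hgg' hf'
        hg']).symm
  · exact hP₁.add hP₂

lemma intervalIntegrable_inv_rpow {γ T : ℝ} (hγ : γ < 1) (hT : 0 ≤ T) :
    IntervalIntegrable (fun u => (u ^ γ)⁻¹) volume 0 T :=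
  (intervalIntegrable_rpow' (r := -γ) (by linarith)).congr fun u hu => by
    rw [uIoc_of_le hT] at hu
    exact Real.rpow_neg hu.1.le γ

theorem fractional_integration_by_parts_general (γ T : ℝ) (hγ : γ ∈ Set.Ioo (0:ℝ) 1)
    (hT : 0 < T) (f g : ℝ → ℝ)
    (hf : ContinuousOn f (Set.Icc 0 T)) (hg : ContinuousOn g (Set.Icc 0 T))
    (hfd : ∀ t ∈ Set.Ioo (0:ℝ) T, DifferentiableAt ℝ f t)
    (hgd : ∀ t ∈ Set.Ioo (0:ℝ) T, DifferentiableAt ℝ g t)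
    (hfi : IntervalIntegrable (deriv f) volume 0 T)
    (hgi : IntervalIntegrable (deriv g) volume 0 T) :
    ∫ t in (0:ℝ)..T, leftCaputo γ f t * g t =
      (∫ t in (0:ℝ)..T, f t * rightCaputo γ T g t) +
        g T * leftRL γ f T - f 0 * rightRL γ T g 0 := by
  have key := volterra_integration_by_parts hT.le hf hg (fun t ht => (hfd t ht).hasDerivAt)
    (fun t ht => (hgd t ht).hasDerivAt) hfi hgi (intervalIntegrable_inv_rpow hγ.2 hT.le)
  set c := (Real.Gamma (1 - γ))⁻¹
  have hL : ∫ t in 0..T, leftCaputo γ f t * g t =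
      c * ∫ t in 0..T, (∫ r in 0..t, deriv f r * ((t - r) ^ γ)⁻¹) * g t := by
    rw [← intervalIntegral.integral_const_mul]
    congr 1; ext t
    simp only [leftCaputo, div_eq_mul_inv]; ring
  have hR : ∫ t in 0..T, f t * rightCaputo γ T g t =
      -c * ∫ t in 0..T, f t * ∫ s in t..T, deriv g s * ((s - t) ^ γ)⁻¹ := by
    rw [← intervalIntegral.integral_const_mul]
    congr 1; ext t
    simp only [rightCaputo, div_eq_mul_inv]; ring
  have hlRL : leftRL γ f T = c * ∫ r in 0..T, f r * ((T - r) ^ γ)⁻¹ := by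
    simp only [leftRL, div_eq_mul_inv, one_mul, c]
  have hrRL : rightRL γ T g 0 = c * ∫ s in 0..T, g s * (s ^ γ)⁻¹ := by
    simp only [rightRL, div_eq_mul_inv, one_mul, sub_zero, c]
  rw [hL, hR, hlRL, hrRL]
  linear_combination c * key

theorem fractional_integration_by_parts (γ T : ℝ) (hγ : γ ∈ Set.Ioo (0:ℝ) 1)
    (hT : 0 < T) (f g : ℝ → ℝ)
    (hf : ContinuousOn f (Set.Icc 0 T)) (hg : ContinuousOn g (Set.Icc 0 T))
    (hfd : ∀ t ∈ Set.Ioo (0:ℝ) T, DifferentiableAt ℝ f t)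
    (hgd : ∀ t ∈ Set.Ioo (0:ℝ) T, DifferentiableAt ℝ g t)
    (hfi : IntervalIntegrable (deriv f) volume 0 T)
    (hgi : IntervalIntegrable (deriv g) volume 0 T)
    (hfL2 : MeasureTheory.MemLp (leftCaputo γ f) 2 (volume.restrict (Set.Ioc 0 T)))
    (hgL2 : MeasureTheory.MemLp (rightCaputo γ T g) 2 (volume.restrict (Set.Ioc 0 T))) :
    ∫ t in (0:ℝ)..T, leftCaputo γ f t * g t =
      (∫ t in (0:ℝ)..T, f t * rightCaputo γ T g t) +
        g T * leftRL γ f T - f 0 * rightRL γ T g 0 :=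
  fractional_integration_by_parts_general γ T hγ hT f g hf hg hfd hgd hfi hgi
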